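/- arXiv:2104.04413 — 3 statements merged into one kernel-verified Lean document; each statement's English description precedes it below -/
import Mathlib

section
/- Let N be a DDNN with layers (W⁽ᵃ'ⁱ⁾, W⁽ᵛ'ⁱ⁾, σ⁽ⁱ⁾), i = 1,…,n, fix a layer index j and an input v ∈ ℝ^{s₀}. Then the DDNN output on v, regarded as a function of the j-th value-channel weight matrix (with all other weight matrices and all activation functions held fixed), is affine: there exist a linear map L from the space of s_j × s_{j−1} real matrices to ℝ^{s_n} and a vector c ∈ ℝ^{s_n} such that, for every s_j × s_{j−1} real matrix M, the output of the DDNN on input v when W⁽ᵛ'ʲ⁾ is replaced by M equals c + L(M). -/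
/-!
The activation channel does not involve the value weights, so every linearization point
`W⁽ᵃ'ⁱ⁾ v⁽ᵃ'ⁱ⁻¹⁾` stays fixed when `W⁽ᵛ'ʲ⁾` varies. A linearization is affine, `M ↦ M w` is
linear, and so layer `j + 1` of the value channel is affine in `W⁽ᵛ'ʲ⁾`; every later layer
composes this with the affine map `x ↦ Linearize σ⁽ⁱ⁾ a (W⁽ᵛ'ⁱ⁾ x)`.
-/

open Matrix

/-- Linearization of `f` around `v₀`. -/
noncomputable def Linearize {E F : Type*} [NormedAddCommGroup E] [NormedSpace ℝ E]
    [NormedAddCommGroup F] [NormedSpace ℝ F] (f : E → F) (v₀ : E) (x : E) : F :=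
  f v₀ + fderiv ℝ f v₀ (x - v₀)

/-- The `k`-th activation-channel intermediate vector `v⁽ᵃ'ᵏ⁾` of a DDNN with
activation-channel weights `Wa` and activations `σ`. -/
def ddnnAct (s : ℕ → ℕ)
    (Wa : ∀ i : ℕ, Matrix (Fin (s (i + 1))) (Fin (s i)) ℝ)
    (σ : ∀ i : ℕ, (Fin (s (i + 1)) → ℝ) → (Fin (s (i + 1)) → ℝ)) :
    ∀ k : ℕ, (Fin (s 0) → ℝ) → (Fin (s k) → ℝ)
  | 0, v => v
  | k + 1, v => σ k ((Wa k).mulVec (ddnnAct s Wa σ k v))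

/-- The `k`-th value-channel intermediate vector `v⁽ᵛ'ᵏ⁾` of a DDNN;
`ddnnVal s Wa Wv σ n` is the function computed by the DDNN. -/
noncomputable def ddnnVal (s : ℕ → ℕ)
    (Wa Wv : ∀ i : ℕ, Matrix (Fin (s (i + 1))) (Fin (s i)) ℝ)
    (σ : ∀ i : ℕ, (Fin (s (i + 1)) → ℝ) → (Fin (s (i + 1)) → ℝ)) :
    ∀ k : ℕ, (Fin (s 0) → ℝ) → (Fin (s k) → ℝ)
  | 0, v => v
  | k + 1, v =>
      Linearize (σ k) ((Wa k).mulVec (ddnnAct s Wa σ k v))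
        ((Wv k).mulVec (ddnnVal s Wa Wv σ k v))

section Linearize

variable {E F : Type*} [NormedAddCommGroup E] [NormedSpace ℝ E]
  [NormedAddCommGroup F] [NormedSpace ℝ F]

noncomputable def linearizeAffineMap (f : E → F) (v₀ : E) : E →ᵃ[ℝ] F :=
  (fderiv ℝ f v₀).toLinearMap.toAffineMap + AffineMap.const ℝ E (f v₀ - fderiv ℝ f v₀ v₀)

theorem coe_linearizeAffineMap (f : E → F) (v₀ : E) :
    ⇑(linearizeAffineMap f v₀) = Linearize f v₀ := by
  funext x
  simp only [linearizeAffineMap, Linearize, AffineMap.coe_add, AffineMap.coe_const,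
    LinearMap.coe_toAffineMap, ContinuousLinearMap.coe_coe, Pi.add_apply,
    Function.const_apply, map_sub]
  abel

end Linearize

section DDNN

variable (s : ℕ → ℕ) (Wa Wv : ∀ i : ℕ, Matrix (Fin (s (i + 1))) (Fin (s i)) ℝ)
  (σ : ∀ i : ℕ, (Fin (s (i + 1)) → ℝ) → (Fin (s (i + 1)) → ℝ)) (v : Fin (s 0) → ℝ)

theorem ddnnVal_succ (k : ℕ) :
    ddnnVal s Wa Wv σ (k + 1) v =
      linearizeAffineMap (σ k) ((Wa k) *ᵥ ddnnAct s Wa σ k v)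
        ((Wv k) *ᵥ ddnnVal s Wa Wv σ k v) := by
  rw [coe_linearizeAffineMap, ddnnVal]

theorem ddnnVal_update_of_le {j : ℕ} (M : Matrix (Fin (s (j + 1))) (Fin (s j)) ℝ) :
    ∀ k ≤ j, ddnnVal s Wa (Function.update Wv j M) σ k v = ddnnVal s Wa Wv σ k v
  | 0, _ => rfl
  | k + 1, hk => by
    rw [ddnnVal_succ, ddnnVal_succ, ddnnVal_update_of_le M k (by omega),
      Function.update_of_ne (by omega)]

theorem exists_affineMap_ddnnVal_update (j : ℕ) :
    ∀ k, j < k → ∃ A : Matrix (Fin (s (j + 1))) (Fin (s j)) ℝ →ᵃ[ℝ] (Fin (s k) → ℝ),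
      ∀ M, ddnnVal s Wa (Function.update Wv j M) σ k v = A M := by
  intro k hk
  induction k, hk using Nat.le_induction with
  | base =>
    refine ⟨(linearizeAffineMap (σ j) ((Wa j) *ᵥ ddnnAct s Wa σ j v)).comp
      ((mulVecBilin ℝ ℝ).flip (ddnnVal s Wa Wv σ j v)).toAffineMap, fun M => ?_⟩
    rw [ddnnVal_succ, ddnnVal_update_of_le s Wa Wv σ v M j le_rfl, Function.update_self]
    rfl
  | succ k hjk ih =>
    obtain ⟨A, hA⟩ := ih
    refine ⟨(linearizeAffineMap (σ k) ((Wa k) *ᵥ ddnnAct s Wa σ k v)).comp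
      ((mulVecLin (Wv k)).toAffineMap.comp A), fun M => ?_⟩
    rw [ddnnVal_succ, hA, Function.update_of_ne (by omega)]
    rfl

end DDNN

theorem ddnn_output_affine_in_value_layer_general (n : ℕ) (s : ℕ → ℕ)
    (Wa Wv : ∀ i : ℕ, Matrix (Fin (s (i + 1))) (Fin (s i)) ℝ)
    (σ : ∀ i : ℕ, (Fin (s (i + 1)) → ℝ) → (Fin (s (i + 1)) → ℝ))
    (j : ℕ) (hj : j < n) (v : Fin (s 0) → ℝ) :
    ∃ (L : Matrix (Fin (s (j + 1))) (Fin (s j)) ℝ →ₗ[ℝ] (Fin (s n) → ℝ))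
      (c : Fin (s n) → ℝ),
      ∀ M : Matrix (Fin (s (j + 1))) (Fin (s j)) ℝ,
        ddnnVal s Wa (Function.update Wv j M) σ n v = c + L M := by
  obtain ⟨A, hA⟩ := exists_affineMap_ddnnVal_update s Wa Wv σ v j n hj
  exact ⟨A.linear, A 0, fun M => (hA M).trans <| (congrFun A.decomp M).trans (add_comm _ _)⟩

/-- For a fixed input `v`, the output of a DDNN is an affine
function of the `j`-th value-channel weight matrix: there are a linear map `L`
and a constant `c` such that replacing `W⁽ᵛ'ʲ⁾` by any matrix `M` yields output
`c + L M`. -/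
theorem ddnn_output_affine_in_value_layer (n : ℕ) (s : ℕ → ℕ)
    (Wa Wv : ∀ i : ℕ, Matrix (Fin (s (i + 1))) (Fin (s i)) ℝ)
    (σ : ∀ i : ℕ, (Fin (s (i + 1)) → ℝ) → (Fin (s (i + 1)) → ℝ))
    (hσ : ∀ i, Differentiable ℝ (σ i))
    (j : ℕ) (hj : j < n) (v : Fin (s 0) → ℝ) :
    ∃ (L : Matrix (Fin (s (j + 1))) (Fin (s j)) ℝ →ₗ[ℝ] (Fin (s n) → ℝ))
      (c : Fin (s n) → ℝ),
      ∀ M : Matrix (Fin (s (j + 1))) (Fin (s j)) ℝ,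
        ddnnVal s Wa (Function.update Wv j M) σ n v = c + L M :=
  ddnn_output_affine_in_value_layer_general n s Wa Wv σ j hj v
end

section
/- Let N be a DDNN, fix a layer index j, and let (X, A^·, b^·) be a pointwise repair specification with X finite. For an s_j × s_{j−1} real matrix Δ, let N_Δ denote the DDNN with W⁽ᵛ'ʲ⁾ replaced by W⁽ᵛ'ʲ⁾ + Δ, and let S = {Δ | N_Δ satisfies the specification}. If S is nonempty, then there exists Δ* ∈ S whose ℓ∞ norm (the maximum absolute value of its entries) is minimal: ‖Δ*‖∞ ≤ ‖Δ‖∞ for every Δ ∈ S. In other words, a minimal single-layer repair exists whenever any single-layer repair of the given layer exists. -/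
/-!
Only the `j`-th value matrix changes, and the linearization `Linearize f v₀` is affine in its
argument (`fderiv ℝ f v₀` is a continuous linear map), so every output `N Δ x` depends
continuously on `Δ`. The set `S` of repairs is therefore an intersection of closed half-space
preimages, hence closed, and a nonempty closed subset of the finite-dimensional space of
matrices contains a point of least entrywise sup norm.
-/

open Matrix

theorem IsClosed.exists_forall_norm_le {E : Type*} [SeminormedAddCommGroup E] [ProperSpace E]
    {S : Set E} (hS : IsClosed S) (hne : S.Nonempty) : ∃ x ∈ S, ∀ y ∈ S, ‖x‖ ≤ ‖y‖ := by
  obtain ⟨x, hx, hdist⟩ := hS.exists_infDist_eq_dist hne 0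
  refine ⟨x, hx, fun y hy => ?_⟩
  have := Metric.infDist_le_dist_of_mem (x := 0) hy
  rwa [hdist, dist_zero_left, dist_zero_left] at this

section EntrywiseSupNorm

attribute [local instance] Matrix.normedAddCommGroup Matrix.normedSpace

theorem Matrix.norm_eq_iSup_abs {m n : Type*} [Fintype m] [Fintype n] (A : Matrix m n ℝ) :
    ‖A‖ = ⨆ p : m × n, |A p.1 p.2| := by
  refine le_antisymm ((norm_le_iff (Real.iSup_nonneg fun _ => abs_nonneg _)).2 fun i j => ?_)
    (Real.iSup_le (fun p => norm_entry_le_entrywise_sup_norm A) (norm_nonneg A))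
  exact le_ciSup (f := fun p : m × n => |A p.1 p.2|) (Set.finite_range _).bddAbove (i, j)

theorem IsClosed.exists_forall_iSup_abs_le {m n : Type*} [Fintype m] [Fintype n]
    {S : Set (Matrix m n ℝ)} (hS : IsClosed S) (hne : S.Nonempty) :
    ∃ A ∈ S, ∀ B ∈ S, ⨆ p : m × n, |A p.1 p.2| ≤ ⨆ p : m × n, |B p.1 p.2| := by
  simpa only [Matrix.norm_eq_iSup_abs] using hS.exists_forall_norm_le hne

end EntrywiseSupNorm

theorem continuous_ddnnVal {α : Type*} [TopologicalSpace α] (s : ℕ → ℕ)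
    (Wa : ∀ i : ℕ, Matrix (Fin (s (i + 1))) (Fin (s i)) ℝ)
    {Wv : α → ∀ i : ℕ, Matrix (Fin (s (i + 1))) (Fin (s i)) ℝ}
    (σ : ∀ i : ℕ, (Fin (s (i + 1)) → ℝ) → (Fin (s (i + 1)) → ℝ))
    (hWv : ∀ i, Continuous fun a => Wv a i) (m : ℕ) (x : Fin (s 0) → ℝ) :
    Continuous fun a => ddnnVal s Wa (Wv a) σ m x := by
  induction m with
  | zero => exact continuous_const
  | succ m ih =>
    exact continuous_const.add
      ((fderiv ℝ (σ m) _).continuous.comp (((hWv m).matrix_mulVec ih).sub continuous_const))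

theorem isClosed_setOf_forall_mulVec_le {α ι n : Type*} {m : ι → Type*} [TopologicalSpace α]
    [Fintype n] (X : Set ι) (A : ∀ x, Matrix (m x) n ℝ) (b : ∀ x, m x → ℝ) {N : α → ι → n → ℝ}
    (hN : ∀ x ∈ X, Continuous fun a => N a x) :
    IsClosed {a | ∀ x ∈ X, ∀ r, (A x *ᵥ N a x) r ≤ b x r} := by
  simp only [Set.ofPred_forall]
  exact isClosed_biInter fun x hx => isClosed_iInter fun r =>
    isClosed_le ((continuous_apply r).comp (continuous_const.matrix_mulVec (hN x hx)))
      continuous_const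

theorem minimal_pointwise_repair_exists_general (n : ℕ) (s : ℕ → ℕ)
    (Wa Wv : ∀ i : ℕ, Matrix (Fin (s (i + 1))) (Fin (s i)) ℝ)
    (σ : ∀ i : ℕ, (Fin (s (i + 1)) → ℝ) → (Fin (s (i + 1)) → ℝ))
    (j : ℕ)
    (X : Finset (Fin (s 0) → ℝ))
    (k : (Fin (s 0) → ℝ) → ℕ)
    (A : ∀ x : Fin (s 0) → ℝ, Matrix (Fin (k x)) (Fin (s n)) ℝ)
    (b : ∀ x : Fin (s 0) → ℝ, Fin (k x) → ℝ)
    (N : Matrix (Fin (s (j + 1))) (Fin (s j)) ℝ → (Fin (s 0) → ℝ) → (Fin (s n) → ℝ))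
    (hN : ∀ Δ x, N Δ x = ddnnVal s Wa (Function.update Wv j (Wv j + Δ)) σ n x)
    (S : Set (Matrix (Fin (s (j + 1))) (Fin (s j)) ℝ))
    (hS : S = {Δ | ∀ x ∈ X, ∀ r, (A x).mulVec (N Δ x) r ≤ b x r})
    (linf : Matrix (Fin (s (j + 1))) (Fin (s j)) ℝ → ℝ)
    (hlinf : ∀ Δ, linf Δ = ⨆ p : Fin (s (j + 1)) × Fin (s j), |Δ p.1 p.2|)
    (hne : S.Nonempty) :
    ∃ Δstar ∈ S, ∀ Δ ∈ S, linf Δstar ≤ linf Δ := by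
  have hN_cont : ∀ x, Continuous fun Δ => N Δ x := fun x => by
    simp only [hN]
    exact continuous_ddnnVal s Wa σ (fun i => (continuous_apply i).comp
      (continuous_const.update j (continuous_const.add continuous_id))) n x
  have hS_closed : IsClosed S :=
    hS ▸ isClosed_setOf_forall_mulVec_le (X : Set _) A b fun x _ => hN_cont x
  obtain ⟨Δstar, hΔstar, hmin⟩ := hS_closed.exists_forall_iSup_abs_le hne
  exact ⟨Δstar, hΔstar, fun Δ hΔ => by simpa only [hlinf] using hmin Δ hΔ⟩

/-- Let `S` be the set of single-layer changes `Δ` to the `j`-th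
value-channel weight matrix of a DDNN for which the changed DDNN satisfies the
pointwise repair specification `(X, A, b)`. If `S` is nonempty, then it contains
an element `Δ*` of minimal ℓ∞ norm (maximum absolute value of the entries):
a minimal single-layer repair exists whenever any single-layer repair exists. -/
theorem minimal_pointwise_repair_exists (n : ℕ) (s : ℕ → ℕ)
    (Wa Wv : ∀ i : ℕ, Matrix (Fin (s (i + 1))) (Fin (s i)) ℝ)
    (σ : ∀ i : ℕ, (Fin (s (i + 1)) → ℝ) → (Fin (s (i + 1)) → ℝ))
    (hσ : ∀ i, Differentiable ℝ (σ i))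
    (j : ℕ) (hj : j < n)
    (X : Finset (Fin (s 0) → ℝ))
    (k : (Fin (s 0) → ℝ) → ℕ)
    (A : ∀ x : Fin (s 0) → ℝ, Matrix (Fin (k x)) (Fin (s n)) ℝ)
    (b : ∀ x : Fin (s 0) → ℝ, Fin (k x) → ℝ)
    (N : Matrix (Fin (s (j + 1))) (Fin (s j)) ℝ → (Fin (s 0) → ℝ) → (Fin (s n) → ℝ))
    (hN : ∀ Δ x, N Δ x = ddnnVal s Wa (Function.update Wv j (Wv j + Δ)) σ n x)
    (S : Set (Matrix (Fin (s (j + 1))) (Fin (s j)) ℝ))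
    (hS : S = {Δ | ∀ x ∈ X, ∀ r, (A x).mulVec (N Δ x) r ≤ b x r})
    (linf : Matrix (Fin (s (j + 1))) (Fin (s j)) ℝ → ℝ)
    (hlinf : ∀ Δ, linf Δ = ⨆ p : Fin (s (j + 1)) × Fin (s j), |Δ p.1 p.2|)
    (hne : S.Nonempty) :
    ∃ Δstar ∈ S, ∀ Δ ∈ S, linf Δstar ≤ linf Δ :=
  minimal_pointwise_repair_exists_general n s Wa Wv σ j X k A b N hN S hS linf hlinf hne
end

section
/- Let N' : ℝ^n → ℝ^m and let P ⊆ ℝ^n satisfy P = R₁ ∪ ⋯ ∪ R_k, where each R_t is the convex hull of a finite set V_t ⊆ ℝ^n and N' agrees with some affine map g_t on R_t (i.e., N'(x) = g_t(x) for all x ∈ R_t). Then, for any real p × m matrix A and any b ∈ ℝ^p: A N'(x) ≤ b componentwise for every x ∈ P if and only if A N'(v) ≤ b componentwise for every t ∈ {1,…,k} and every v ∈ V_t. In other words, a polytope repair specification over P is satisfied if and only if the corresponding pointwise repair specification over the vertices of the linear regions is satisfied. -/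
open Matrix

theorem Set.MapsTo.convexHull_of_eqOn_affineMap {𝕜 E F : Type*} [Field 𝕜] [LinearOrder 𝕜]
    [IsStrictOrderedRing 𝕜] [AddCommGroup E] [Module 𝕜 E] [AddCommGroup F] [Module 𝕜 F]
    {s : Set E} {C : Set F} {f : E → F} (φ : E →ᵃ[𝕜] F) (hf : Set.EqOn f φ (convexHull 𝕜 s))
    (hC : Convex 𝕜 C) (hs : Set.MapsTo f s C) : Set.MapsTo f (convexHull 𝕜 s) C := by
  have hφ : convexHull 𝕜 s ⊆ φ ⁻¹' C :=
    convexHull_min (fun v hv => by simpa [← hf (subset_convexHull 𝕜 s hv)] using hs hv)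
      (hC.affine_preimage φ)
  exact fun x hx => by simpa [hf hx] using hφ hx

theorem Matrix.convex_setOf_mulVec_le {𝕜 ι κ : Type*} [Field 𝕜] [LinearOrder 𝕜]
    [IsStrictOrderedRing 𝕜] [Fintype κ] (A : Matrix ι κ 𝕜) (b : ι → 𝕜) :
    Convex 𝕜 {y | ∀ i, (A *ᵥ y) i ≤ b i} :=
  (convex_Iic b).linear_preimage A.mulVecLin

theorem polytope_spec_iff_vertex_spec_general (n m p k : ℕ)
    (N' : (Fin n → ℝ) → (Fin m → ℝ))
    (P : Set (Fin n → ℝ))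
    (V : Fin k → Set (Fin n → ℝ))
    (hP : P = ⋃ t, convexHull ℝ (V t))
    (g : Fin k → (Fin n → ℝ) → (Fin m → ℝ))
    (hg : ∀ t, ∃ (M : Matrix (Fin m) (Fin n) ℝ) (c : Fin m → ℝ),
      ∀ x, g t x = M.mulVec x + c)
    (hagree : ∀ t, ∀ x ∈ convexHull ℝ (V t), N' x = g t x)
    (A : Matrix (Fin p) (Fin m) ℝ) (b : Fin p → ℝ) :
    (∀ x ∈ P, ∀ i, A.mulVec (N' x) i ≤ b i) ↔
      (∀ t, ∀ v ∈ V t, ∀ i, A.mulVec (N' v) i ≤ b i) := by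
  subst hP
  refine ⟨fun h t v hv => h v (Set.mem_iUnion_of_mem t (subset_convexHull ℝ _ hv)), ?_⟩
  rintro h x ⟨_, ⟨t, rfl⟩, hxt⟩
  obtain ⟨M, c, hMc⟩ := hg t
  let φ : (Fin n → ℝ) →ᵃ[ℝ] (Fin m → ℝ) := M.toLin'.toAffineMap + AffineMap.const ℝ _ c
  have hN' : Set.EqOn N' φ (convexHull ℝ (V t)) := fun y hy => by simp [φ, hagree t y hy, hMc]
  exact Set.MapsTo.convexHull_of_eqOn_affineMap φ hN' (A.convex_setOf_mulVec_le b) (h t) hxt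

/-- Suppose `P = R₁ ∪ ⋯ ∪ R_k`, where each `R_t` is the convex
hull of a finite set `V_t` and `N'` agrees with an affine map `g_t` on `R_t`.
Then `A N'(x) ≤ b` componentwise for every `x ∈ P` iff `A N'(v) ≤ b`
componentwise for every `t` and every `v ∈ V_t`: the polytope repair
specification holds iff the corresponding pointwise repair specification over
the vertices of the linear regions holds. -/
theorem polytope_spec_iff_vertex_spec (n m p k : ℕ)
    (N' : (Fin n → ℝ) → (Fin m → ℝ))
    (P : Set (Fin n → ℝ))
    (V : Fin k → Set (Fin n → ℝ)) (hVfin : ∀ t, (V t).Finite)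
    (hP : P = ⋃ t, convexHull ℝ (V t))
    (g : Fin k → (Fin n → ℝ) → (Fin m → ℝ))
    (hg : ∀ t, ∃ (M : Matrix (Fin m) (Fin n) ℝ) (c : Fin m → ℝ),
      ∀ x, g t x = M.mulVec x + c)
    (hagree : ∀ t, ∀ x ∈ convexHull ℝ (V t), N' x = g t x)
    (A : Matrix (Fin p) (Fin m) ℝ) (b : Fin p → ℝ) :
    (∀ x ∈ P, ∀ i, A.mulVec (N' x) i ≤ b i) ↔
      (∀ t, ∀ v ∈ V t, ∀ i, A.mulVec (N' v) i ≤ b i) :=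
  polytope_spec_iff_vertex_spec_general n m p k N' P V hP g hg hagree A b
end
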